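/- arXiv:2011.01788 — 3 statements merged into one kernel-verified Lean document; each statement's English description precedes it below -/
import Mathlib

section
/- Let p and q be probability mass functions on a finite set S. Then the L1 distance is bounded via the KL divergence: Σ_x |p(x) - q(x)| ≤ √(2 · D_KL(p‖q)), where D_KL(p‖q) = Σ_x p(x) · log(p(x)/q(x)). -/
/-! The sharpened scalar bound `klFun t ≥ 3 (t - 1)² / (2 (t + 2))` holds because the difference
is convex on `[0, ∞)`, its second derivative being `1/t - 27/(t + 2)³ ≥ 0`, with a critical point
at `t = 1`. Scaled by `q(x)` at `t = p(x) / q(x)` and summed, it gives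
`D_KL(p‖q) ≥ (3/2) ∑ (p - q)² / (p + 2q)`, and Cauchy–Schwarz with weights `p + 2q`, of total
mass `3`, turns this into `(∑ |p - q|)² ≤ 2 D_KL(p‖q)`. -/

open Real Set Finset InformationTheory

lemma hasDerivAt_three_mul_sq_sub_one_div {t : ℝ} (ht : t + 2 ≠ 0) :
    HasDerivAt (fun t ↦ 3 * (t - 1) ^ 2 / (2 * (t + 2)))
      (3 * (t - 1) * (t + 5) / (2 * (t + 2) ^ 2)) t := by
  refine (((((hasDerivAt_id' t).sub_const 1).fun_pow 2).const_mul 3).fun_div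
    (((hasDerivAt_id' t).add_const 2).const_mul 2) (mul_ne_zero two_ne_zero ht)).congr_deriv ?_
  field_simp
  ring

lemma hasDerivAt_three_mul_sub_one_mul_add_five_div {t : ℝ} (ht : t + 2 ≠ 0) :
    HasDerivAt (fun t ↦ 3 * (t - 1) * (t + 5) / (2 * (t + 2) ^ 2)) (27 / (t + 2) ^ 3) t := by
  refine (((((hasDerivAt_id' t).sub_const 1).const_mul 3).fun_mul
    ((hasDerivAt_id' t).add_const 5)).fun_div
    ((((hasDerivAt_id' t).add_const 2).fun_pow 2).const_mul 2) (by simpa using ht)).congr_deriv ?_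
  field_simp
  ring

lemma twentyseven_div_add_two_pow_three_le_inv {t : ℝ} (ht : 0 < t) :
    27 / (t + 2) ^ 3 ≤ t⁻¹ := by
  rw [div_le_iff₀ (by positivity), inv_mul_eq_div, le_div_iff₀ ht]
  -- `(t + 2)³ - 27 t = (t - 1)² (t + 8)`
  nlinarith [mul_nonneg (sq_nonneg (t - 1)) (by linarith : (0 : ℝ) ≤ t + 8)]

lemma convexOn_klFun_sub_three_mul_sq_sub_one_div :
    ConvexOn ℝ (Ici 0) (fun t ↦ klFun t - 3 * (t - 1) ^ 2 / (2 * (t + 2))) := by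
  refine convexOn_of_hasDerivWithinAt2_nonneg (convex_Ici 0)
    (f' := fun t ↦ log t - 3 * (t - 1) * (t + 5) / (2 * (t + 2) ^ 2))
    (f'' := fun t ↦ t⁻¹ - 27 / (t + 2) ^ 3) ?_ ?_ ?_ ?_
  · exact continuous_klFun.continuousOn.sub <| ContinuousOn.div (by fun_prop) (by fun_prop)
      fun t (ht : 0 ≤ t) ↦ by positivity
  all_goals simp only [interior_Ici, Set.mem_Ioi]
  · intro t ht
    exact ((hasDerivAt_klFun ht.ne').sub
      (hasDerivAt_three_mul_sq_sub_one_div (by positivity))).hasDerivWithinAt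
  · intro t ht
    exact ((hasDerivAt_log ht.ne').sub
      (hasDerivAt_three_mul_sub_one_mul_add_five_div (by positivity))).hasDerivWithinAt
  · exact fun t ht ↦ sub_nonneg.2 (twentyseven_div_add_two_pow_three_le_inv ht)

lemma three_mul_sq_sub_one_div_le_klFun {t : ℝ} (ht : 0 ≤ t) :
    3 * (t - 1) ^ 2 / (2 * (t + 2)) ≤ klFun t := by
  have hderiv : HasDerivAt (fun t ↦ klFun t - 3 * (t - 1) ^ 2 / (2 * (t + 2))) 0 1 := by
    refine ((hasDerivAt_klFun one_ne_zero).sub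
      (hasDerivAt_three_mul_sq_sub_one_div (by norm_num))).congr_deriv ?_
    norm_num
  have hmin := convexOn_klFun_sub_three_mul_sq_sub_one_div.isMinOn_of_rightDeriv_eq_zero
    (by simp) (hderiv.hasDerivWithinAt.derivWithin (uniqueDiffWithinAt_Ioi 1))
  simpa [klFun_one] using hmin (mem_Ici.2 ht)

lemma three_mul_sq_sub_div_le_mul_log_div_add_sub {p q : ℝ} (hp : 0 ≤ p) (hq : 0 ≤ q)
    (hpq : 0 < p → 0 < q) :
    3 * (p - q) ^ 2 / (2 * (p + 2 * q)) ≤ p * log (p / q) + q - p := by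
  rcases hq.eq_or_lt with rfl | hq
  · obtain rfl : p = 0 := by by_contra hp0; exact (hpq (hp.lt_of_ne' hp0)).false
    simp
  calc 3 * (p - q) ^ 2 / (2 * (p + 2 * q))
      = q * (3 * (p / q - 1) ^ 2 / (2 * (p / q + 2))) := by field_simp
    _ ≤ q * klFun (p / q) := by
        gcongr
        exact three_mul_sq_sub_one_div_le_klFun (div_nonneg hp hq.le)
    _ = p * log (p / q) + q - p := by
        rw [klFun_apply]
        field_simp

lemma sq_sum_abs_sub_le_sum_mul_sum_sq_div {ι : Type*} (s : Finset ι) {p q : ι → ℝ}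
    (hp : ∀ x ∈ s, 0 ≤ p x) (hq : ∀ x ∈ s, 0 ≤ q x) :
    (∑ x ∈ s, |p x - q x|) ^ 2 ≤
      (∑ x ∈ s, (p x + 2 * q x)) * ∑ x ∈ s, (p x - q x) ^ 2 / (p x + 2 * q x) := by
  refine sum_sq_le_sum_mul_sum_of_sq_le_mul s (fun x hx ↦ by linarith [hp x hx, hq x hx])
    (fun x hx ↦ div_nonneg (sq_nonneg _) (by linarith [hp x hx, hq x hx])) fun x hx ↦ ?_
  rcases eq_or_ne (p x + 2 * q x) 0 with hw | hw
  · have hpx : p x = 0 := by linarith [hp x hx, hq x hx]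
    have hqx : q x = 0 := by linarith [hp x hx, hq x hx]
    simp [hpx, hqx]
  · rw [sq_abs, mul_div_cancel₀ _ hw]

/-- Pinsker's inequality on a finite set. -/
theorem pinsker_finite
    {S : Type*} [Fintype S] (p q : S → ℝ)
    (hpnn : ∀ x, 0 ≤ p x) (hpsum : ∑ x, p x = 1)
    (hqnn : ∀ x, 0 ≤ q x) (hqsum : ∑ x, q x = 1)
    (hpos : ∀ x, 0 < p x → 0 < q x) :
    ∑ x, |p x - q x| ≤ Real.sqrt (2 * ∑ x, p x * Real.log (p x / q x)) := by
  have hweight : ∑ x, (p x + 2 * q x) = 3 := by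
    rw [sum_add_distrib, ← mul_sum, hpsum, hqsum]
    norm_num
  refine le_sqrt_of_sq_le ?_
  calc (∑ x, |p x - q x|) ^ 2
      ≤ 3 * ∑ x, (p x - q x) ^ 2 / (p x + 2 * q x) := by
        simpa [hweight] using
          sq_sum_abs_sub_le_sum_mul_sum_sq_div univ (fun x _ ↦ hpnn x) fun x _ ↦ hqnn x
    _ = 2 * ∑ x, 3 * (p x - q x) ^ 2 / (2 * (p x + 2 * q x)) := by
        rw [mul_sum, mul_sum]
        exact sum_congr rfl fun x _ ↦ by rw [← div_div]; ring
    _ ≤ 2 * ∑ x, (p x * log (p x / q x) + q x - p x) := by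
        gcongr with x
        exact three_mul_sq_sub_div_le_mul_log_div_add_sub (hpnn x) (hqnn x) (hpos x)
    _ = 2 * ∑ x, p x * log (p x / q x) := by
        rw [sum_sub_distrib, sum_add_distrib, hpsum, hqsum]
        ring
end

section
/- Let p be a probability mass function on a finite set S of cardinality k, and let p_N be the empirical distribution of N i.i.d. samples drawn from p. Then for every ε > 0, P(‖p - p_N‖₁ ≥ ε) ≤ (2^k - 2) · exp(-N ε² / 2). -/
/-!
Write `d = p_N - p`. Since `∑ d = 0`, the L1 deviation equals `2 ∑_{x ∈ A} d x` for
`A = {d > 0}`, and when it is positive `A` is a nonempty proper subset of `S`. So the event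
`‖p - p_N‖₁ ≥ ε` is covered by the `2^k - 2` events `p_N(A) - p(A) ≥ ε / 2`, each a deviation of a
sum of `N` independent Bernoulli variables, of probability at most `exp(-N ε² / 2)` by Hoeffding.
-/

open MeasureTheory ProbabilityTheory Finset

lemma sum_abs_eq_two_mul_sum_filter_pos {ι : Type*} (s : Finset ι) (d : ι → ℝ)
    (hd : ∑ x ∈ s, d x = 0) : ∑ x ∈ s, |d x| = 2 * ∑ x ∈ s with 0 < d x, d x := by
  have habs : ∀ x, |d x| = 2 * (if 0 < d x then d x else 0) - d x := fun x => by
    split_ifs with h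
    · rw [abs_of_pos h]; ring
    · rw [abs_of_nonpos (not_lt.1 h)]; ring
  rw [sum_congr rfl fun x _ => habs x, sum_sub_distrib, hd, sub_zero, sum_filter, mul_sum]

lemma card_ssubsets_erase_empty {α : Type*} [DecidableEq α] {s : Finset α} (hs : s.Nonempty) :
    (#(s.ssubsets.erase ∅) : ℝ) = 2 ^ #s - 2 := by
  have h2 : 2 ≤ 2 ^ #s := Nat.le_self_pow hs.card_pos.ne' 2
  rw [card_erase_of_mem (empty_mem_ssubsets hs), ssubsets, card_erase_of_mem (mem_powerset_self s),
    card_powerset, Nat.sub_sub, Nat.cast_sub h2]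
  push_cast
  ring

section Empirical

variable {S : Type*} [DecidableEq S] {N : ℕ}

noncomputable def empiricalFreq (f : Fin N → S) (x : S) : ℝ := #{i | f i = x} / N

lemma mul_sum_empiricalFreq (hN : 0 < N) (f : Fin N → S) (A : Finset S) :
    N * ∑ x ∈ A, empiricalFreq f x = #{i | f i ∈ A} := by
  simp only [empiricalFreq]
  rw [← sum_div, mul_div_cancel₀ _ (by positivity), ← Nat.cast_sum,
    sum_card_fiberwise_eq_card_filter]

lemma sum_empiricalFreq [Fintype S] (hN : 0 < N) (f : Fin N → S) :
    ∑ x, empiricalFreq f x = 1 := by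
  have := mul_sum_empiricalFreq hN f univ
  simp only [mem_univ, filter_true, card_univ, Fintype.card_fin] at this
  exact mul_left_cancel₀ (Nat.cast_ne_zero.2 hN.ne') (this.trans (mul_one _).symm)

lemma exists_sum_indicator_sub_ge_of_le_sum_abs [Fintype S] (hN : 0 < N) {p : S → ℝ}
    (hpsum : ∑ x, p x = 1) (f : Fin N → S) {ε : ℝ} (hε : 0 < ε)
    (h : ε ≤ ∑ x, |p x - empiricalFreq f x|) :
    ∃ A ∈ (univ : Finset S).ssubsets.erase ∅,
      N * ε / 2 ≤ ∑ i, ((A : Set S).indicator 1 (f i) - ∑ x ∈ A, p x) := by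
  set d : S → ℝ := fun x => empiricalFreq f x - p x
  have hd : ∑ x, d x = 0 := by simp [d, sum_sub_distrib, sum_empiricalFreq hN, hpsum]
  set A : Finset S := {x | 0 < d x}
  have hA : ε / 2 ≤ ∑ x ∈ A, d x := by
    have hL1 : ∑ x, |p x - empiricalFreq f x| = 2 * ∑ x ∈ A, d x := by
      rw [← sum_abs_eq_two_mul_sum_filter_pos univ d hd]
      exact sum_congr rfl fun x _ => abs_sub_comm _ _
    linarith
  have hpos : 0 < ∑ x ∈ A, d x := by linarith
  refine ⟨A, mem_erase.2 ⟨?_, mem_ssubsets.2 (ssubset_univ_iff.2 ?_)⟩, ?_⟩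
  · rintro hA; rw [hA, sum_empty] at hpos; exact lt_irrefl _ hpos
  · rintro hA; rw [hA, hd] at hpos; exact lt_irrefl _ hpos
  · calc (N : ℝ) * ε / 2 ≤ N * ∑ x ∈ A, d x := by rw [mul_div_assoc]; gcongr
      _ = ∑ i, ((A : Set S).indicator 1 (f i) - ∑ x ∈ A, p x) := by
        simp only [d, sum_sub_distrib, mul_sub, mul_sum_empiricalFreq hN, sum_const, card_univ,
          Fintype.card_fin, nsmul_eq_mul, Set.indicator_apply, mem_coe, Pi.one_apply, sum_boole]

end Empirical

lemma measureReal_sum_sub_integral_ge_le {Ω ι : Type*} [MeasurableSpace Ω]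
    {P : Measure Ω} [IsProbabilityMeasure P] {Y : ι → Ω → ℝ} (hY : ∀ i, AEMeasurable (Y i) P)
    (hindep : iIndepFun Y P) (hbound : ∀ i, ∀ᵐ ω ∂P, Y i ω ∈ Set.Icc 0 1) (s : Finset ι)
    {t : ℝ} (ht : 0 ≤ t) :
    P.real {ω | t ≤ ∑ i ∈ s, (Y i ω - P[Y i])} ≤ Real.exp (-2 * t ^ 2 / #s) := by
  have hcentered : iIndepFun (fun i ω => Y i ω - P[Y i]) P :=
    hindep.comp (fun i y => y - ∫ ω, Y i ω ∂P) fun i => measurable_id.sub_const _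
  have hparam : 2 * ((∑ _i ∈ s, (‖(1 : ℝ) - 0‖₊ / 2) ^ 2 : NNReal) : ℝ) = #s / 2 := by
    simp only [sub_zero, nnnorm_one, one_div, inv_pow, sum_const, nsmul_eq_mul, NNReal.coe_mul,
      NNReal.coe_natCast, NNReal.coe_inv, NNReal.coe_pow, NNReal.coe_ofNat]
    ring
  calc _ ≤ _ := HasSubgaussianMGF.measure_sum_ge_le_of_iIndepFun hcentered
        (fun i _ => hasSubgaussianMGF_of_mem_Icc (hY i) (hbound i)) ht
    _ = Real.exp (-2 * t ^ 2 / #s) := by rw [hparam]; ring_nf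

lemma measureReal_preimage_finset_eq_sum {Ω S : Type*} [MeasurableSpace Ω] [MeasurableSpace S]
    [MeasurableSingletonClass S] {P : Measure Ω} [IsFiniteMeasure P] {Z : Ω → S}
    (hZ : Measurable Z) {p : S → ℝ} (hpnn : ∀ x, 0 ≤ p x)
    (hlaw : ∀ x, P {ω | Z ω = x} = ENNReal.ofReal (p x)) (A : Finset S) :
    P.real (Z ⁻¹' A) = ∑ x ∈ A, p x := by
  rw [← sum_measureReal_preimage_singleton A fun x _ => hZ (measurableSet_singleton x)]
  refine sum_congr rfl fun x _ => ?_
  change (P {ω | Z ω = x}).toReal = p x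
  rw [hlaw, ENNReal.toReal_ofReal (hpnn x)]

lemma measure_sum_indicator_sub_ge_le {Ω ι S : Type*} [MeasurableSpace Ω] [Fintype ι]
    [MeasurableSpace S] [MeasurableSingletonClass S] {P : Measure Ω} [IsProbabilityMeasure P]
    {X : ι → Ω → S} (hmeas : ∀ i, Measurable (X i)) (hindep : iIndepFun X P)
    {p : S → ℝ} (hpnn : ∀ x, 0 ≤ p x) (hlaw : ∀ i x, P {ω | X i ω = x} = ENNReal.ofReal (p x))
    (A : Finset S) {t : ℝ} (ht : 0 ≤ t) :
    P {ω | t ≤ ∑ i, ((A : Set S).indicator 1 (X i ω) - ∑ x ∈ A, p x)}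
      ≤ ENNReal.ofReal (Real.exp (-2 * t ^ 2 / Fintype.card ι)) := by
  set Y : ι → Ω → ℝ := fun i => (A : Set S).indicator 1 ∘ X i
  have hY : ∀ i, Measurable (Y i) := fun i =>
    (measurable_one.indicator A.measurableSet).comp (hmeas i)
  have hmean : ∀ i, P[Y i] = ∑ x ∈ A, p x := fun i => by
    rw [← measureReal_preimage_finset_eq_sum (hmeas i) hpnn (hlaw i), ← integral_indicator_one
      ((hmeas i) A.measurableSet)]
    rfl
  have hbound : ∀ i ω, Y i ω ∈ Set.Icc 0 1 := fun i ω => by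
    by_cases h : X i ω ∈ A <;> simp [Y, h]
  have := measureReal_sum_sub_integral_ge_le (fun i => (hY i).aemeasurable)
    (hindep.comp _ fun _ => measurable_one.indicator A.measurableSet)
    (fun i => ae_of_all _ (hbound i)) univ ht
  simp only [hmean, card_univ] at this
  exact (ENNReal.le_ofReal_iff_toReal_le (measure_ne_top _ _) (Real.exp_pos _).le).2 this

/-- Weissman et al. concentration inequality for the L1 deviation of the
empirical measure of `N` i.i.d. samples from `p`. -/
theorem weissman_l1_concentration
    {S Ω : Type*} [Fintype S] [DecidableEq S] [MeasurableSpace S]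
    [MeasurableSingletonClass S] [MeasurableSpace Ω]
    (P : Measure Ω) [IsProbabilityMeasure P]
    (p : S → ℝ) (hpnn : ∀ x, 0 ≤ p x) (hpsum : ∑ x, p x = 1)
    (N : ℕ) (hN : 0 < N) (X : Fin N → Ω → S)
    (hmeas : ∀ i, Measurable (X i))
    (hlaw : ∀ i s, P {ω | X i ω = s} = ENNReal.ofReal (p s))
    (hindep : iIndepFun X P)
    (ε : ℝ) (hε : 0 < ε) :
    P {ω | ∑ x, |p x - ((Finset.univ.filter fun i => X i ω = x).card : ℝ) / N| ≥ ε}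
      ≤ ENNReal.ofReal ((2 ^ (Fintype.card S) - 2) * Real.exp (-(N : ℝ) * ε ^ 2 / 2)) := by
  set T := (univ : Finset S).ssubsets.erase ∅
  set E : Finset S → Set Ω :=
    fun A => {ω | N * ε / 2 ≤ ∑ i, ((A : Set S).indicator 1 (X i ω) - ∑ x ∈ A, p x)}
  have hexp : Real.exp (-2 * (N * ε / 2) ^ 2 / Fintype.card (Fin N))
      = Real.exp (-(N : ℝ) * ε ^ 2 / 2) := by
    rw [Fintype.card_fin]; field_simp
  have hS : (univ : Finset S).Nonempty :=
    nonempty_of_sum_ne_zero (by rw [hpsum]; exact one_ne_zero)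
  calc P {ω | ∑ x, |p x - ((Finset.univ.filter fun i => X i ω = x).card : ℝ) / N| ≥ ε}
      ≤ P (⋃ A ∈ T, E A) := measure_mono fun ω hω => by
        obtain ⟨A, hA, hle⟩ := exists_sum_indicator_sub_ge_of_le_sum_abs hN hpsum (X · ω) hε hω
        exact Set.mem_biUnion hA hle
    _ ≤ ∑ A ∈ T, P (E A) := measure_biUnion_finset_le T E
    _ ≤ ∑ A ∈ T, ENNReal.ofReal (Real.exp (-(N : ℝ) * ε ^ 2 / 2)) := sum_le_sum fun A _ =>
        hexp ▸ measure_sum_indicator_sub_ge_le hmeas hindep hpnn hlaw A (by positivity)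
    _ = ENNReal.ofReal ((2 ^ (Fintype.card S) - 2) * Real.exp (-(N : ℝ) * ε ^ 2 / 2)) := by
        rw [sum_const, nsmul_eq_mul, ← ENNReal.ofReal_natCast,
          ← ENNReal.ofReal_mul (Nat.cast_nonneg _), card_ssubsets_erase_empty hS, card_univ]
end

section
/- Consider a finite-horizon MDP with finite state space S, finite action space A, horizon h ≥ 1, bounded reward |R(s,a)| ≤ R_max, true transition kernel T, and approximate transition kernel T̂. Let π̂* be an optimal policy for the MDP with transitions T̂, and let V* and V^{π̂*} denote the optimal value and the value of π̂* under the true transitions T. Then for all states s: V*(s) - V^{π̂*}(s) ≤ 2 h² R_max · max_{s,a} ‖T(·|s,a) - T̂(·|s,a)‖₁. -/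
variable {S A : Type*} [Fintype S] [Fintype A] [Nonempty S] [Nonempty A]

/-- `t`-step value of a (nonstationary) policy `π` under transitions `T`
and rewards `R`: `π t` is the decision rule used with `t+1` steps to go. -/
def polVal (T : S → A → S → ℝ) (R : S → A → ℝ) (π : ℕ → S → A) : ℕ → S → ℝ
  | 0, _ => 0
  | t + 1, s =>
      R s (π t s) + ∑ s', T s (π t s) s' * polVal T R π t s'

/-- `t`-step optimal value under transitions `T` and rewards `R`. -/
def optVal (T : S → A → S → ℝ) (R : S → A → ℝ) : ℕ → S → ℝ
  | 0, _ => 0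
  | t + 1, s =>
      Finset.univ.sup' Finset.univ_nonempty
        (fun a => R s a + ∑ s', T s a s' * optVal T R t s')


section helpers
variable {S : Type*} [Fintype S]

lemma sum_mul_abs_le (P v : S → ℝ) (C : ℝ) (hP : ∀ s, 0 ≤ P s)
    (hPs : ∑ s, P s = 1) (hv : ∀ s, |v s| ≤ C) :
    |∑ s, P s * v s| ≤ C := by
  calc |∑ s, P s * v s| ≤ ∑ s, |P s * v s| := Finset.abs_sum_le_sum_abs _ _
    _ = ∑ s, P s * |v s| := by
        refine Finset.sum_congr rfl fun s _ => ?_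
        rw [abs_mul, abs_of_nonneg (hP s)]
    _ ≤ ∑ s, P s * C := Finset.sum_le_sum fun s _ => mul_le_mul_of_nonneg_left (hv s) (hP s)
    _ = C := by rw [← Finset.sum_mul, hPs, one_mul]

lemma sum_diff_mul_le (P Q v : S → ℝ) (C ε : ℝ)
    (hv : ∀ s, |v s| ≤ C) (hC : 0 ≤ C) (hε : ∑ s, |P s - Q s| ≤ ε) :
    |∑ s, (P s - Q s) * v s| ≤ ε * C := by
  calc |∑ s, (P s - Q s) * v s| ≤ ∑ s, |(P s - Q s) * v s| := Finset.abs_sum_le_sum_abs _ _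
    _ = ∑ s, |P s - Q s| * |v s| := by simp [abs_mul]
    _ ≤ ∑ s, |P s - Q s| * C := Finset.sum_le_sum fun s _ =>
        mul_le_mul_of_nonneg_left (hv s) (abs_nonneg _)
    _ = (∑ s, |P s - Q s|) * C := (Finset.sum_mul _ _ _).symm
    _ ≤ ε * C := mul_le_mul_of_nonneg_right hε hC

lemma abs_sup'_sub_sup'_le {A : Type*} [Fintype A] [Nonempty A] (f g : A → ℝ) (C : ℝ)
    (hfg : ∀ a, |f a - g a| ≤ C) :
    |(Finset.univ.sup' Finset.univ_nonempty f) - Finset.univ.sup' Finset.univ_nonempty g| ≤ C := by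
  rw [abs_le]
  constructor
  · rw [neg_le, neg_sub]
    rw [sub_le_iff_le_add]
    refine Finset.sup'_le _ _ fun a _ => ?_
    have h1 := (abs_le.1 (hfg a)).1
    have h2 := Finset.le_sup' f (Finset.mem_univ a)
    linarith
  · rw [sub_le_iff_le_add]
    refine Finset.sup'_le _ _ fun a _ => ?_
    have h1 := (abs_le.1 (hfg a)).2
    have h2 := Finset.le_sup' g (Finset.mem_univ a)
    linarith
end helpers

section values
variable {S A : Type*} [Fintype S] [Fintype A] [Nonempty S] [Nonempty A]

lemma polVal_abs_le (T : S → A → S → ℝ) (R : S → A → ℝ) (Rmax : ℝ) (π : ℕ → S → A)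
    (hTnn : ∀ s a s', 0 ≤ T s a s') (hTsum : ∀ s a, ∑ s', T s a s' = 1)
    (hR : ∀ s a, |R s a| ≤ Rmax) :
    ∀ t s, |polVal T R π t s| ≤ t * Rmax := by
  intro t
  induction t with
  | zero => intro s; simp [polVal]
  | succ t ih =>
    intro s
    have h1 : |∑ s', T s (π t s) s' * polVal T R π t s'| ≤ t * Rmax :=
      sum_mul_abs_le _ _ _ (hTnn s (π t s)) (hTsum s (π t s)) ih
    have h2 := hR s (π t s)
    calc |polVal T R π (t + 1) s|
        ≤ |R s (π t s)| + |∑ s', T s (π t s) s' * polVal T R π t s'| := by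
          simpa [polVal] using abs_add_le _ _
      _ ≤ (↑(t + 1) : ℝ) * Rmax := by push_cast; linarith

lemma optVal_abs_le (T : S → A → S → ℝ) (R : S → A → ℝ) (Rmax : ℝ)
    (hTnn : ∀ s a s', 0 ≤ T s a s') (hTsum : ∀ s a, ∑ s', T s a s' = 1)
    (hR : ∀ s a, |R s a| ≤ Rmax) :
    ∀ t s, |optVal T R t s| ≤ t * Rmax := by
  intro t
  induction t with
  | zero => intro s; simp [optVal]
  | succ t ih =>
    intro s
    have key : ∀ a : A, |R s a + ∑ s', T s a s' * optVal T R t s'| ≤ (↑(t + 1) : ℝ) * Rmax := by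
      intro a
      have h1 : |∑ s', T s a s' * optVal T R t s'| ≤ t * Rmax :=
        sum_mul_abs_le _ _ _ (hTnn s a) (hTsum s a) ih
      have h2 := hR s a
      calc |R s a + ∑ s', T s a s' * optVal T R t s'|
          ≤ |R s a| + |∑ s', T s a s' * optVal T R t s'| := abs_add_le _ _
        _ ≤ (↑(t + 1) : ℝ) * Rmax := by push_cast; linarith
    show |Finset.univ.sup' Finset.univ_nonempty
      (fun a => R s a + ∑ s', T s a s' * optVal T R t s')| ≤ _
    rw [abs_le]
    constructor
    · obtain ⟨a⟩ := ‹Nonempty A›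
      have := Finset.le_sup' (fun a => R s a + ∑ s', T s a s' * optVal T R t s')
        (Finset.mem_univ a)
      have := (abs_le.1 (key a)).1
      linarith
    · exact Finset.sup'_le _ _ fun a _ => (abs_le.1 (key a)).2

lemma polVal_diff_le (T Th : S → A → S → ℝ) (R : S → A → ℝ) (Rmax ε : ℝ) (π : ℕ → S → A)
    (hTnn : ∀ s a s', 0 ≤ T s a s') (hTsum : ∀ s a, ∑ s', T s a s' = 1)
    (hThnn : ∀ s a s', 0 ≤ Th s a s') (hThsum : ∀ s a, ∑ s', Th s a s' = 1)
    (hR : ∀ s a, |R s a| ≤ Rmax)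
    (hε : ∀ s a, ∑ s', |T s a s' - Th s a s'| ≤ ε) (hε0 : 0 ≤ ε) :
    ∀ t s, |polVal T R π t s - polVal Th R π t s| ≤ ε * Rmax * t * t := by
  have hRmax : 0 ≤ Rmax := le_trans (abs_nonneg _) (hR (Classical.arbitrary S) (Classical.arbitrary A))
  intro t
  induction t with
  | zero => intro s; simp [polVal]
  | succ t ih =>
    intro s
    set a := π t s
    have key : polVal T R π (t + 1) s - polVal Th R π (t + 1) s
        = (∑ s', T s a s' * (polVal T R π t s' - polVal Th R π t s'))
          + ∑ s', (T s a s' - Th s a s') * polVal Th R π t s' := by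
      simp only [polVal, mul_sub, sub_mul, Finset.sum_sub_distrib]
      ring
    have h1 : |∑ s', T s a s' * (polVal T R π t s' - polVal Th R π t s')|
        ≤ ε * Rmax * t * t := sum_mul_abs_le _ _ _ (hTnn s a) (hTsum s a) ih
    have h2 : |∑ s', (T s a s' - Th s a s') * polVal Th R π t s'| ≤ ε * (t * Rmax) :=
      sum_diff_mul_le _ _ _ _ _ (polVal_abs_le Th R Rmax π hThnn hThsum hR t)
        (by positivity) (hε s a)
    calc |polVal T R π (t + 1) s - polVal Th R π (t + 1) s|
        ≤ |∑ s', T s a s' * (polVal T R π t s' - polVal Th R π t s')|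
          + |∑ s', (T s a s' - Th s a s') * polVal Th R π t s'| := by
          rw [key]; exact abs_add_le _ _
      _ ≤ ε * Rmax * ↑(t + 1) * ↑(t + 1) := by
          push_cast
          nlinarith [mul_nonneg hε0 hRmax, Nat.cast_nonneg (α := ℝ) t]

lemma optVal_diff_le (T Th : S → A → S → ℝ) (R : S → A → ℝ) (Rmax ε : ℝ)
    (hTnn : ∀ s a s', 0 ≤ T s a s') (hTsum : ∀ s a, ∑ s', T s a s' = 1)
    (hThnn : ∀ s a s', 0 ≤ Th s a s') (hThsum : ∀ s a, ∑ s', Th s a s' = 1)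
    (hR : ∀ s a, |R s a| ≤ Rmax)
    (hε : ∀ s a, ∑ s', |T s a s' - Th s a s'| ≤ ε) (hε0 : 0 ≤ ε) :
    ∀ t s, |optVal T R t s - optVal Th R t s| ≤ ε * Rmax * t * t := by
  have hRmax : 0 ≤ Rmax := le_trans (abs_nonneg _) (hR (Classical.arbitrary S) (Classical.arbitrary A))
  intro t
  induction t with
  | zero => intro s; simp [optVal]
  | succ t ih =>
    intro s
    have key : ∀ a : A, |(R s a + ∑ s', T s a s' * optVal T R t s')
        - (R s a + ∑ s', Th s a s' * optVal Th R t s')| ≤ ε * Rmax * ↑(t + 1) * ↑(t + 1) := by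
      intro a
      have heq : (R s a + ∑ s', T s a s' * optVal T R t s')
          - (R s a + ∑ s', Th s a s' * optVal Th R t s')
          = (∑ s', T s a s' * (optVal T R t s' - optVal Th R t s'))
            + ∑ s', (T s a s' - Th s a s') * optVal Th R t s' := by
        simp only [mul_sub, sub_mul, Finset.sum_sub_distrib]
        ring
      have h1 : |∑ s', T s a s' * (optVal T R t s' - optVal Th R t s')|
          ≤ ε * Rmax * t * t := sum_mul_abs_le _ _ _ (hTnn s a) (hTsum s a) ih
      have h2 : |∑ s', (T s a s' - Th s a s') * optVal Th R t s'| ≤ ε * (t * Rmax) :=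
        sum_diff_mul_le _ _ _ _ _ (optVal_abs_le Th R Rmax hThnn hThsum hR t)
          (by positivity) (hε s a)
      calc |(R s a + ∑ s', T s a s' * optVal T R t s')
          - (R s a + ∑ s', Th s a s' * optVal Th R t s')|
          ≤ |∑ s', T s a s' * (optVal T R t s' - optVal Th R t s')|
            + |∑ s', (T s a s' - Th s a s') * optVal Th R t s'| := by
            rw [heq]; exact abs_add_le _ _
        _ ≤ ε * Rmax * ↑(t + 1) * ↑(t + 1) := by
            push_cast
            nlinarith [mul_nonneg hε0 hRmax, Nat.cast_nonneg (α := ℝ) t]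
    show |Finset.univ.sup' Finset.univ_nonempty _ - Finset.univ.sup' Finset.univ_nonempty _| ≤ _
    exact abs_sup'_sub_sup'_le _ _ _ key
end values

/-- Theorem 1 (simulation lemma): the value loss of acting on the optimal
policy of an approximate MDP is bounded by `2 h² R_max` times the worst-case
L1 distance between the true and approximate transition kernels. -/
theorem mdp_loss_bound
    {S A : Type*} [Fintype S] [Fintype A] [Nonempty S] [Nonempty A]
    (T Th : S → A → S → ℝ) (R : S → A → ℝ) (Rmax : ℝ)
    (hTnn : ∀ s a s', 0 ≤ T s a s') (hTsum : ∀ s a, ∑ s', T s a s' = 1)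
    (hThnn : ∀ s a s', 0 ≤ Th s a s') (hThsum : ∀ s a, ∑ s', Th s a s' = 1)
    (hR : ∀ s a, |R s a| ≤ Rmax)
    (h : ℕ) (hh : 1 ≤ h)
    (πh : ℕ → S → A)
    (hopt : ∀ s, polVal Th R πh h s = optVal Th R h s) :
    ∀ s, optVal T R h s - polVal T R πh h s
      ≤ 2 * (h : ℝ) ^ 2 * Rmax *
        (Finset.univ : Finset (S × A)).sup' Finset.univ_nonempty
          (fun sa => ∑ s', |T sa.1 sa.2 s' - Th sa.1 sa.2 s'|) := by
  intro s
  set ε := (Finset.univ : Finset (S × A)).sup' Finset.univ_nonempty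
      (fun sa => ∑ s', |T sa.1 sa.2 s' - Th sa.1 sa.2 s'|) with hεdef
  have hε : ∀ s a, ∑ s', |T s a s' - Th s a s'| ≤ ε := fun s a =>
    Finset.le_sup' (fun sa : S × A => ∑ s', |T sa.1 sa.2 s' - Th sa.1 sa.2 s'|)
      (Finset.mem_univ (s, a))
  have hε0 : 0 ≤ ε := le_trans
    (Finset.sum_nonneg fun _ _ => abs_nonneg _)
    (hε (Classical.arbitrary S) (Classical.arbitrary A))
  have h1 := optVal_diff_le T Th R Rmax ε hTnn hTsum hThnn hThsum hR hε hε0 h s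
  have h2 := polVal_diff_le T Th R Rmax ε πh hTnn hTsum hThnn hThsum hR hε hε0 h s
  have h1' := (abs_le.1 h1).2
  have h2' := (abs_le.1 h2).1
  have hopt' := hopt s
  nlinarith [sq_nonneg ((h : ℝ))]
end
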